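/- arXiv:2412.02797 — 2 statements merged into one kernel-verified Lean document; each statement's English description precedes it below -/
import Mathlib

section
/- Let d ≥ 1, 1 ≤ q ≤ 2 and r > 1/q. There exists a constant C = C(d, q, r) such that every f ∈ 𝐇^r_q satisfies ‖f_j‖_A ≤ C · 2^{−(r−1/q)j} (max(j,1))^{d−1} for all j ∈ ℕ_0. In particular, 𝐇^r_q is embedded (up to the constant C) into the class 𝐖^{a,b}_A with a = r − 1/q and b = 1. -/
open MeasureTheory Real Complex
open scoped BigOperators

noncomputable section

instance : Fact (0 < 2 * Real.pi) := ⟨by positivity⟩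

/-- The one-dimensional torus `ℝ / 2πℤ`. -/
abbrev 𝕋 : Type := AddCircle (2 * Real.pi)

/-- The `d`-dimensional torus. -/
abbrev Td (d : ℕ) : Type := Fin d → 𝕋

/-- The normalized Lebesgue measure on the `d`-torus (a probability measure). -/
def μT (d : ℕ) : Measure (Td d) :=
  ((ENNReal.ofReal (2 * Real.pi)) ^ d)⁻¹ • (volume : Measure (Td d))

/-- `L_p` norm (`1 ≤ p < ∞`) with respect to the normalized measure on the torus. -/
def pNorm (d : ℕ) (p : ℝ) (f : Td d → ℂ) : ℝ :=
  (∫ x, ‖f x‖ ^ p ∂(μT d)) ^ (1 / p)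

/-- The multivariate exponential `e^{i(k,x)}`. -/
def eChar {d : ℕ} (k : Fin d → ℤ) (x : Td d) : ℂ := ∏ j, fourier (k j) (x j)

/-- Fourier coefficient `f̂(k)`. -/
def fCoeff {d : ℕ} (f : Td d → ℂ) (k : Fin d → ℤ) : ℂ :=
  ∫ x, f x * (starRingEnd ℂ) (eChar k x) ∂(μT d)

/-- Normalized convolution on the torus. -/
def conv {d : ℕ} (f g : Td d → ℂ) : Td d → ℂ :=
  fun x => ∫ y, f y * g (x - y) ∂(μT d)

/-- The dyadic block `ρ(s) = {k : ⌊2^{s_j-1}⌋ ≤ |k_j| < 2^{s_j}}`. -/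
def rhoFinset (d : ℕ) (s : Fin d → ℕ) : Finset (Fin d → ℤ) :=
  (Fintype.piFinset fun j => Finset.Icc (-(2 ^ s j : ℤ)) (2 ^ s j)).filter
    fun k => ∀ j, ((2 ^ s j : ℤ) / 2) ≤ |k j| ∧ |k j| < 2 ^ s j

/-- The finite set of `s ∈ ℕ_0^d` with `‖s‖₁ = j`. -/
def sLevel (d j : ℕ) : Finset (Fin d → ℕ) :=
  (Fintype.piFinset fun _ => Finset.range (j + 1)).filter fun s => ∑ i, s i = j

/-- The step hyperbolic cross `Q_n = ∪_{‖s‖₁ ≤ n} ρ(s)`. -/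
def Qn (d n : ℕ) : Set (Fin d → ℤ) :=
  {k | ∃ s : Fin d → ℕ, (∑ i, s i) ≤ n ∧ k ∈ rhoFinset d s}

/-- `S_n := min_{‖s‖₁ = n} |ρ(s)|`. -/
def Sn (d n : ℕ) : ℕ :=
  sInf {c : ℕ | ∃ s : Fin d → ℕ, (∑ i, s i) = n ∧ c = (rhoFinset d s).card}

/-- `f` is a trigonometric polynomial with frequencies in `Q`. -/
def trigPolyIn {d : ℕ} (Q : Set (Fin d → ℤ)) (f : Td d → ℂ) : Prop :=
  ∃ (F : Finset (Fin d → ℤ)) (coef : (Fin d → ℤ) → ℂ),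
    ↑F ⊆ Q ∧ ∀ x, f x = ∑ k ∈ F, coef k * eChar k x

/-- Single `l = 1` difference with step `t` in the variable `j`. -/
def singleDiff {d : ℕ} (j : Fin d) (t : ℝ) (f : Td d → ℂ) : Td d → ℂ :=
  fun x => f (x + Pi.single j ((t : ℝ) : 𝕋)) - f x

/-- Mixed `l`-th difference `Δ_t^l(e)`. -/
def mixedDiff {d : ℕ} (l : ℕ) (t : Fin d → ℝ) (e : Finset (Fin d)) (f : Td d → ℂ) :
    Td d → ℂ :=
  (List.finRange d).foldr (fun j g => if j ∈ e then (singleDiff j (t j))^[l] g else g) f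

/-- The class `𝐇^r_q` (with `l = ⌊r⌋ + 1`), defined via mixed differences. -/
def HClass (d : ℕ) (r : ℝ) (q : ENNReal) : Set (Td d → ℂ) :=
  {f | Continuous f ∧
    ∀ (e : Finset (Fin d)) (t : Fin d → ℝ),
      eLpNorm (mixedDiff (⌊r⌋₊ + 1) t e f) q (μT d) ≤
        ENNReal.ofReal (∏ j ∈ e, |t j| ^ r)}

/-- The univariate Bernoulli-type kernel `F_r(x) = 1 + 2∑_{k≥1} k^{-r} cos(kx - rπ/2)`. -/
def FrU (r : ℝ) (x : 𝕋) : ℂ :=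
  1 + 2 * ∑' n : ℕ, ((((n : ℝ) + 1) ^ (-r) *
    (fourier ((n : ℤ) + 1) x * Complex.exp (-(Complex.I * ((r : ℂ) * (Real.pi : ℂ) / 2)))).re
      : ℝ) : ℂ)

/-- The multivariate kernel `F_r(x) = ∏_j F_r(x_j)`. -/
def FrM (d : ℕ) (r : ℝ) (x : Td d) : ℂ := ∏ j, FrU r (x j)

/-- The class `𝐖^r_q = {φ * F_r : ‖φ‖_q ≤ 1}`. -/
def WClass (d : ℕ) (r : ℝ) (q : ENNReal) : Set (Td d → ℂ) :=
  {f | ∃ φ : Td d → ℂ, AEStronglyMeasurable φ (μT d) ∧ eLpNorm φ q (μT d) ≤ 1 ∧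
    f = conv φ (FrM d r)}

/-- The univariate Fejér kernel `𝒦_j`. -/
def fejerK (j : ℕ) (x : 𝕋) : ℂ :=
  ∑ k ∈ Finset.Icc (-(j : ℤ)) (j : ℤ), (((1 : ℝ) - (k.natAbs : ℝ) / (j : ℝ)) : ℂ) * fourier k x

/-- The de la Vallée Poussin kernel `𝒱_m = 2𝒦_{2m} - 𝒦_m`. -/
def vallee (m : ℕ) (x : 𝕋) : ℂ := 2 * fejerK (2 * m) x - fejerK m x

/-- The univariate building blocks `𝒜_s`. -/
def AUni : ℕ → 𝕋 → ℂ
  | 0, _ => 1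
  | 1, x => vallee 1 x - 1
  | (s + 2), x => vallee (2 ^ (s + 1)) x - vallee (2 ^ s) x

/-- The multivariate `𝒜_s`. -/
def AMulti (d : ℕ) (s : Fin d → ℕ) (x : Td d) : ℂ := ∏ j, AUni (s j) (x j)

/-- The operator `A_s(f) := f * 𝒜_s` (normalized convolution). -/
def ASop {d : ℕ} (s : Fin d → ℕ) (f : Td d → ℂ) : Td d → ℂ := conv f (AMulti d s)

/-- The class `𝐇(Q_n)_q = {f ∈ 𝒯(Q_n) : ‖A_s(f)‖_q ≤ 1 ∀ s}`. -/
def HQClass (d n : ℕ) (q : ℝ) : Set (Td d → ℂ) :=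
  {f | trigPolyIn (Qn d n) f ∧ ∀ s : Fin d → ℕ, pNorm d q (ASop s f) ≤ 1}

/-- The Wiener norm of the dyadic piece `f_j = ∑_{‖s‖₁=j} δ_s(f)`:
`‖f_j‖_A = ∑_{‖s‖₁=j} ∑_{k ∈ ρ(s)} |f̂(k)|`. -/
def ANormPiece {d : ℕ} (f : Td d → ℂ) (j : ℕ) : ℝ :=
  ∑ s ∈ sLevel d j, ∑ k ∈ rhoFinset d s, ‖fCoeff f k‖

/-- The `A_β` quasi-norm restricted to frequencies in `S`. -/
def ABetaOn {d : ℕ} (β : ℝ) (S : Finset (Fin d → ℤ)) (f : Td d → ℂ) : ℝ :=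
  (∑ k ∈ S, ‖fCoeff f k‖ ^ β) ^ (1 / β)

/-- The `A_β` quasi-norm of the dyadic piece `f_j`. -/
def ABetaPiece {d : ℕ} (β : ℝ) (f : Td d → ℂ) (j : ℕ) : ℝ :=
  (∑ s ∈ sLevel d j, ∑ k ∈ rhoFinset d s, ‖fCoeff f k‖ ^ β) ^ (1 / β)

/-- `f` has an absolutely convergent Fourier series (w.r.t. the trigonometric system). -/
def absConvFourier {d : ℕ} (f : Td d → ℂ) : Prop :=
  Summable (fun k : Fin d → ℤ => ‖fCoeff f k‖) ∧
    ∀ x, HasSum (fun k : Fin d → ℤ => fCoeff f k * eChar k x) (f x)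

/-- The class `𝐇^{a,b}_{A_β}(𝒯^d)`. -/
def HABClass (d : ℕ) (a b β : ℝ) : Set (Td d → ℂ) :=
  {f | absConvFourier f ∧ ∀ (j : ℕ) (s : Fin d → ℕ), (∑ i, s i) = j →
    ABetaOn β (rhoFinset d s) f ≤
      (2 : ℝ) ^ (-(a * (j : ℝ))) * ((max j 1 : ℕ) : ℝ) ^ (((d : ℝ) - 1) * b)}

/-- The class `𝐖^{a,b}_A(𝒯^d)`. -/
def WABClass (d : ℕ) (a b : ℝ) : Set (Td d → ℂ) :=
  {f | absConvFourier f ∧ ∀ j : ℕ,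
    ANormPiece f j ≤ (2 : ℝ) ^ (-(a * (j : ℝ))) * ((max j 1 : ℕ) : ℝ) ^ (((d : ℝ) - 1) * b)}

/-- The class `𝐖^{a,b}_{A_β}(𝒯^d)`. -/
def WABBetaClass (d : ℕ) (a b β : ℝ) : Set (Td d → ℂ) :=
  {f | absConvFourier f ∧ ∀ j : ℕ,
    ABetaPiece β f j ≤ (2 : ℝ) ^ (-(a * (j : ℝ))) * ((max j 1 : ℕ) : ℝ) ^ (((d : ℝ) - 1) * b)}

/-- The box `Π(N,d) = {k : |k_j| ≤ N_j}`. -/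
def PiN (d : ℕ) (N : Fin d → ℕ) : Finset (Fin d → ℤ) :=
  Fintype.piFinset fun j => Finset.Icc (-(N j : ℤ)) (N j)

/-- `θ(N) = ∏_j (2N_j + 1)`. -/
def thetaN (d : ℕ) (N : Fin d → ℕ) : ℕ := ∏ j, (2 * N j + 1)

end

/-! ### Auxiliary lemmas -/

section Aux

open scoped ENNReal

instance (d : ℕ) : IsProbabilityMeasure (μT d) := by
  constructor
  rw [μT, Measure.smul_apply,
    show (volume : Measure (Td d)) = Measure.pi (fun _ => volume) from rfl, Measure.pi_univ]
  simp only [AddCircle.measure_univ, Finset.prod_const, Finset.card_univ, Fintype.card_fin,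
    smul_eq_mul]
  rw [ENNReal.inv_mul_cancel]
  · positivity
  · exact ENNReal.pow_ne_top ENNReal.ofReal_ne_top

instance (d : ℕ) : (μT d).IsAddRightInvariant := by unfold μT; infer_instance

theorem cont_integrable {d : ℕ} {E : Type*} [NormedAddCommGroup E] {f : Td d → E}
    (h : Continuous f) : Integrable f (μT d) :=
  h.integrable_of_hasCompactSupport (HasCompactSupport.of_compactSpace f)

theorem eChar_continuous {d : ℕ} (k : Fin d → ℤ) : Continuous (eChar k) := by
  unfold eChar
  exact continuous_finset_prod _ fun j _ => (fourier (k j)).continuous.comp (continuous_apply j)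

theorem abs_eChar {d : ℕ} (k : Fin d → ℤ) (x : Td d) : ‖eChar k x‖ = 1 := by
  unfold eChar
  rw [norm_prod]
  exact Finset.prod_eq_one fun j _ => Circle.norm_coe _

theorem eChar_add {d : ℕ} (k : Fin d → ℤ) (x y : Td d) :
    eChar k (x + y) = eChar k x * eChar k y := by
  unfold eChar
  rw [← Finset.prod_mul_distrib]
  refine Finset.prod_congr rfl fun j _ => ?_
  show fourier (k j) (x j + y j) = _
  simp only [fourier_apply, smul_add, AddCircle.toCircle_add, Circle.coe_mul]

theorem conj_eChar_mul_self {d : ℕ} (k : Fin d → ℤ) (a : Td d) :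
    (starRingEnd ℂ) (eChar k a) * eChar k a = 1 := by
  rw [mul_comm, Complex.mul_conj, Complex.normSq_eq_norm_sq, abs_eChar]
  norm_num

end Aux

section Coeff

theorem integrable_mul_conj_eChar {d : ℕ} {g : Td d → ℂ} (hg : Continuous g)
    (k : Fin d → ℤ) : Integrable (fun x => g x * (starRingEnd ℂ) (eChar k x)) (μT d) :=
  cont_integrable (hg.mul ((Complex.continuous_conj).comp (eChar_continuous k)))

theorem fCoeff_translate {d : ℕ} (g : Td d → ℂ) (k : Fin d → ℤ) (a : Td d) :
    fCoeff (fun x => g (x + a)) k = eChar k a * fCoeff g k := by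
  unfold fCoeff
  have key : ∀ x : Td d, g (x + a) * (starRingEnd ℂ) (eChar k x) =
      (fun y => g y * (starRingEnd ℂ) (eChar k y)) (x + a) * eChar k a := by
    intro x
    simp only
    rw [eChar_add, map_mul]
    have h1 := conj_eChar_mul_self k a
    calc g (x + a) * (starRingEnd ℂ) (eChar k x)
        = g (x + a) * ((starRingEnd ℂ) (eChar k x) *
            ((starRingEnd ℂ) (eChar k a) * eChar k a)) := by rw [h1, mul_one]
      _ = g (x + a) * ((starRingEnd ℂ) (eChar k x) * (starRingEnd ℂ) (eChar k a)) *
            eChar k a := by ring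
  simp_rw [key]
  rw [integral_mul_const, integral_add_right_eq_self (μ := μT d)
    (fun y => g y * (starRingEnd ℂ) (eChar k y)) a, mul_comm]

theorem eChar_single {d : ℕ} (k : Fin d → ℤ) (j : Fin d) (t : ℝ) :
    eChar k (Pi.single j ((t : ℝ) : 𝕋)) = fourier (k j) ((t : ℝ) : 𝕋) := by
  unfold eChar
  rw [Finset.prod_eq_single j]
  · rw [Pi.single_eq_same]
  · intro i _ hij
    rw [Pi.single_eq_of_ne hij]
    show fourier (k i) ((0 : 𝕋)) = 1
    rw [show ((0 : 𝕋)) = ((0 : ℝ) : 𝕋) from rfl, fourier_coe_apply]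
    simp
  · simp

theorem singleDiff_continuous {d : ℕ} (j : Fin d) (t : ℝ) {g : Td d → ℂ}
    (hg : Continuous g) : Continuous (singleDiff j t g) :=
  (hg.comp (continuous_id.add continuous_const)).sub hg

theorem singleDiff_iter_continuous {d : ℕ} (j : Fin d) (t : ℝ) (l : ℕ) {g : Td d → ℂ}
    (hg : Continuous g) : Continuous ((singleDiff j t)^[l] g) := by
  induction l with
  | zero => exact hg
  | succ n ih => rw [Function.iterate_succ_apply']; exact singleDiff_continuous j t ih

theorem fCoeff_singleDiff {d : ℕ} (j : Fin d) (t : ℝ) {g : Td d → ℂ} (hg : Continuous g)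
    (k : Fin d → ℤ) :
    fCoeff (singleDiff j t g) k = (fourier (k j) ((t : ℝ) : 𝕋) - 1) * fCoeff g k := by
  have h1 : fCoeff (singleDiff j t g) k =
      fCoeff (fun x => g (x + Pi.single j ((t : ℝ) : 𝕋))) k - fCoeff g k := by
    unfold fCoeff singleDiff
    have h2 : Continuous fun x : Td d => g (x + Pi.single j ((t : ℝ) : 𝕋)) :=
      hg.comp (continuous_id.add continuous_const)
    rw [← integral_sub (integrable_mul_conj_eChar h2 k) (integrable_mul_conj_eChar hg k)]
    congr 1; ext x; ring
  rw [h1, fCoeff_translate, eChar_single, sub_mul, one_mul]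

theorem fCoeff_singleDiff_iter {d : ℕ} (j : Fin d) (t : ℝ) (l : ℕ) {g : Td d → ℂ}
    (hg : Continuous g) (k : Fin d → ℤ) :
    fCoeff ((singleDiff j t)^[l] g) k = (fourier (k j) ((t : ℝ) : 𝕋) - 1) ^ l * fCoeff g k := by
  induction l with
  | zero => simp
  | succ n ih =>
    rw [Function.iterate_succ_apply', fCoeff_singleDiff j t
      (singleDiff_iter_continuous j t n hg), ih, pow_succ]
    ring

theorem mixedDiff_continuous {d : ℕ} (l : ℕ) (t : Fin d → ℝ) (e : Finset (Fin d))
    {f : Td d → ℂ} (hf : Continuous f) : Continuous (mixedDiff l t e f) := by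
  unfold mixedDiff
  induction (List.finRange d) with
  | nil => exact hf
  | cons a L ih =>
    rw [List.foldr_cons]
    by_cases ha : a ∈ e
    · rw [if_pos ha]; exact singleDiff_iter_continuous a (t a) l ih
    · rwa [if_neg ha]

theorem fCoeff_mixedDiff {d : ℕ} (l : ℕ) (t : Fin d → ℝ) (e : Finset (Fin d))
    {f : Td d → ℂ} (hf : Continuous f) (k : Fin d → ℤ) :
    fCoeff (mixedDiff l t e f) k =
      (∏ i ∈ e, (fourier (k i) ((t i : ℝ) : 𝕋) - 1) ^ l) * fCoeff f k := by
  have main : ∀ L : List (Fin d),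
      fCoeff (L.foldr (fun j g => if j ∈ e then (singleDiff j (t j))^[l] g else g) f) k =
      (L.map fun i => if i ∈ e then (fourier (k i) ((t i : ℝ) : 𝕋) - 1) ^ l else 1).prod *
        fCoeff f k ∧
      Continuous (L.foldr (fun j g => if j ∈ e then (singleDiff j (t j))^[l] g else g) f) := by
    intro L
    induction L with
    | nil => exact ⟨by simp, hf⟩
    | cons a L ih =>
      rw [List.foldr_cons, List.map_cons, List.prod_cons]
      by_cases ha : a ∈ e
      · rw [if_pos ha, if_pos ha]
        refine ⟨?_, singleDiff_iter_continuous a (t a) l ih.2⟩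
        rw [fCoeff_singleDiff_iter a (t a) l ih.2, ih.1, mul_assoc]
      · rw [if_neg ha, if_neg ha, one_mul]
        exact ih
  rw [mixedDiff, (main (List.finRange d)).1]
  congr 1
  rw [← Fin.prod_univ_def]
  rw [Finset.prod_ite_mem Finset.univ e fun i => (fourier (k i) ((t i : ℝ) : 𝕋) - 1) ^ l,
    Finset.univ_inter]

end Coeff

section Orth

theorem integral_fourier_haar (m : ℤ) :
    (∫ x : 𝕋, fourier m x ∂(AddCircle.haarAddCircle)) = if m = 0 then 1 else 0 := by
  split_ifs with hm
  · subst hm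
    rw [show (fun x : 𝕋 => (fourier 0) x) = fun _ : 𝕋 => (1 : ℂ) from
      funext fun x => fourier_zero]
    simp
  · exact integral_eq_zero_of_add_right_eq_neg
      (fourier_add_half_inv_index hm (by positivity))

theorem integral_prod_muT {d : ℕ} (f : Fin d → 𝕋 → ℂ) (hf : ∀ j, Continuous (f j)) :
    ∫ x : Td d, ∏ j, f j (x j) ∂(μT d) = ∏ j, ∫ x : 𝕋, f j x ∂(AddCircle.haarAddCircle) := by
  rw [μT, integral_smul_measure]
  rw [show (volume : Measure (Td d)) = Measure.pi (fun _ => volume) from rfl,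
    MeasureTheory.integral_fintype_prod_eq_prod (ι := Fin d) f]
  have huni : ∀ j : Fin d, ∫ x : 𝕋, f j x =
      (2 * Real.pi) * ∫ x : 𝕋, f j x ∂(AddCircle.haarAddCircle) := by
    intro j
    rw [AddCircle.volume_eq_smul_haarAddCircle, integral_smul_measure,
      ENNReal.toReal_ofReal (by positivity)]
    simp [smul_eq_mul]
  simp_rw [huni]
  rw [Finset.prod_mul_distrib, Finset.prod_const, Finset.card_univ, Fintype.card_fin]
  rw [ENNReal.toReal_inv, ENNReal.toReal_pow, ENNReal.toReal_ofReal (by positivity)]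
  rw [Complex.real_smul]
  push_cast
  rw [← mul_assoc, inv_mul_cancel₀ (pow_ne_zero _ (by simp [Real.pi_ne_zero])), one_mul]

theorem eChar_orth {d : ℕ} (k k' : Fin d → ℤ) :
    ∫ x, eChar k x * (starRingEnd ℂ) (eChar k' x) ∂(μT d) =
      if k = k' then 1 else 0 := by
  have hpt : ∀ x : Td d, eChar k x * (starRingEnd ℂ) (eChar k' x) =
      ∏ j, fourier (k j - k' j) (x j) := by
    intro x
    unfold eChar
    rw [map_prod, ← Finset.prod_mul_distrib]
    refine Finset.prod_congr rfl fun j _ => ?_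
    rw [sub_eq_add_neg, fourier_add, fourier_neg]
  simp_rw [hpt]
  rw [integral_prod_muT _ (fun j => (fourier (k j - k' j)).continuous)]
  simp_rw [integral_fourier_haar]
  by_cases h : k = k'
  · subst h
    simp
  · rw [if_neg h]
    obtain ⟨j, hj⟩ : ∃ j, k j ≠ k' j := by
      by_contra hc
      push_neg at hc
      exact h (funext hc)
    exact Finset.prod_eq_zero (Finset.mem_univ j) (by rw [if_neg (sub_ne_zero.mpr hj)])

end Orth

section Dual

open scoped ENNReal

theorem sum_abs_fCoeff_le {d : ℕ} (F : Finset (Fin d → ℤ)) {g : Td d → ℂ}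
    (hg : Continuous g) {q : ℝ} (hq1 : 1 ≤ q) (hq2 : q ≤ 2) :
    ENNReal.ofReal (∑ k ∈ F, ‖fCoeff g k‖) ≤
      eLpNorm g (ENNReal.ofReal q) (μT d) * (F.card : ℝ≥0∞) ^ (1 / q) := by
  classical
  rcases Finset.eq_empty_or_nonempty F with rfl | hFne
  · simp
  set c : (Fin d → ℤ) → ℂ := fun k =>
    if fCoeff g k = 0 then 1
    else (starRingEnd ℂ) (fCoeff g k) / ((‖fCoeff g k‖ : ℝ) : ℂ) with hc
  have hc_abs : ∀ k, ‖c k‖ ≤ 1 := by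
    intro k
    rw [hc]
    by_cases h : fCoeff g k = 0
    · simp [h]
    · simp only [if_neg h]
      rw [norm_div, RCLike.norm_conj, Complex.norm_real, Real.norm_eq_abs,
        _root_.abs_of_nonneg (norm_nonneg _), div_self (norm_ne_zero_iff.mpr h)]
  have hc_mul : ∀ k, c k * fCoeff g k = ((‖fCoeff g k‖ : ℝ) : ℂ) := by
    intro k
    rw [hc]
    by_cases h : fCoeff g k = 0
    · simp [h]
    · simp only [if_neg h]
      have hne : ((‖fCoeff g k‖ : ℝ) : ℂ) ≠ 0 :=
        Complex.ofReal_ne_zero.mpr (norm_ne_zero_iff.mpr h)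
      rw [div_mul_eq_mul_div, mul_comm, Complex.mul_conj, Complex.normSq_eq_norm_sq,
        div_eq_iff hne]
      push_cast
      ring
  set P : Td d → ℂ := fun x => ∑ k ∈ F, (starRingEnd ℂ) (c k) * eChar k x with hP
  have hPcont : Continuous P :=
    continuous_finset_sum _ fun k _ => continuous_const.mul (eChar_continuous k)
  have hP1 : ∀ x, ‖P x‖ ≤ (F.card : ℝ) := by
    intro x
    calc ‖P x‖ ≤ ∑ k ∈ F, ‖(starRingEnd ℂ) (c k) * eChar k x‖ := norm_sum_le _ _
      _ ≤ ∑ _k ∈ F, (1 : ℝ) := by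
          refine Finset.sum_le_sum fun k _ => ?_
          rw [norm_mul, RCLike.norm_conj, abs_eChar,
            mul_one]
          exact hc_abs k
      _ = (F.card : ℝ) := by simp
  have hPsup : ∀ x, (‖P x‖₊ : ℝ≥0∞) ≤ (F.card : ℝ≥0∞) := by
    intro x
    rw [← enorm_eq_nnnorm, ← ofReal_norm, ← ENNReal.ofReal_natCast]
    exact ENNReal.ofReal_le_ofReal (hP1 x)
  -- step 1 : duality representation
  have hconjP : ∀ x, (starRingEnd ℂ) (P x) = ∑ k ∈ F, c k * (starRingEnd ℂ) (eChar k x) := by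
    intro x
    rw [hP, map_sum]
    exact Finset.sum_congr rfl fun k _ => by rw [map_mul, Complex.conj_conj]
  have step1 : ((∑ k ∈ F, ‖fCoeff g k‖ : ℝ) : ℂ) =
      ∫ x, g x * (starRingEnd ℂ) (P x) ∂(μT d) := by
    have h1 : ∀ x, g x * (starRingEnd ℂ) (P x) =
        ∑ k ∈ F, c k * (g x * (starRingEnd ℂ) (eChar k x)) := by
      intro x
      rw [hconjP, Finset.mul_sum]
      exact Finset.sum_congr rfl fun k _ => by ring
    simp_rw [h1]
    rw [integral_finset_sum _ (fun k _ =>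
      (integrable_mul_conj_eChar hg k).const_mul (c k))]
    have h2 : ∀ k ∈ F, ∫ x, c k * (g x * (starRingEnd ℂ) (eChar k x)) ∂(μT d) =
        ((‖fCoeff g k‖ : ℝ) : ℂ) := by
      intro k _
      rw [integral_const_mul]
      exact hc_mul k
    rw [Finset.sum_congr rfl h2]
    push_cast
    rfl
  have step2 : ENNReal.ofReal (∑ k ∈ F, ‖fCoeff g k‖) ≤
      ∫⁻ x, (‖g x‖₊ : ℝ≥0∞) * (‖P x‖₊ : ℝ≥0∞) ∂(μT d) := by
    have hS : (∑ k ∈ F, ‖fCoeff g k‖) =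
        ‖∫ x, g x * (starRingEnd ℂ) (P x) ∂(μT d)‖ := by
      rw [← step1, Complex.norm_real, Real.norm_eq_abs, _root_.abs_of_nonneg
        (Finset.sum_nonneg fun k _ => norm_nonneg _)]
    rw [hS, ofReal_norm]
    refine le_trans (enorm_integral_le_lintegral_enorm _) (le_of_eq ?_)
    refine lintegral_congr fun x => ?_
    rw [enorm_eq_nnnorm, nnnorm_mul, RCLike.nnnorm_conj, ENNReal.coe_mul]
  -- Parseval-type bound for P
  have hP2 : ∫⁻ x, (‖P x‖₊ : ℝ≥0∞) ^ (2 : ℝ) ∂(μT d) ≤ (F.card : ℝ≥0∞) := by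
    have hexp : ∀ x, P x * (starRingEnd ℂ) (P x) =
        ∑ k ∈ F, ∑ k' ∈ F, ((starRingEnd ℂ) (c k) * c k') *
          (eChar k x * (starRingEnd ℂ) (eChar k' x)) := by
      intro x
      rw [hP, map_sum, Finset.sum_mul_sum]
      refine Finset.sum_congr rfl fun k _ => Finset.sum_congr rfl fun k' _ => ?_
      rw [map_mul, Complex.conj_conj]
      ring
    have hPP : ∫ x, P x * (starRingEnd ℂ) (P x) ∂(μT d) =
        ∑ k ∈ F, ((‖c k‖ ^ 2 : ℝ) : ℂ) := by
      simp_rw [hexp]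
      rw [integral_finset_sum _ (fun k _ => integrable_finset_sum _ (fun k' _ =>
        ((integrable_mul_conj_eChar (eChar_continuous k) k')).const_mul _))]
      have hin : ∀ k ∈ F, ∫ x, ∑ k' ∈ F, ((starRingEnd ℂ) (c k) * c k') *
          (eChar k x * (starRingEnd ℂ) (eChar k' x)) ∂(μT d) =
          ((‖c k‖ ^ 2 : ℝ) : ℂ) := by
        intro k hk
        rw [integral_finset_sum _ (fun k' _ =>
          ((integrable_mul_conj_eChar (eChar_continuous k) k')).const_mul _)]
        have : ∀ k' ∈ F, ∫ x, ((starRingEnd ℂ) (c k) * c k') *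
            (eChar k x * (starRingEnd ℂ) (eChar k' x)) ∂(μT d) =
            if k = k' then (starRingEnd ℂ) (c k) * c k' else 0 := by
          intro k' _
          rw [integral_const_mul, eChar_orth]
          split_ifs <;> simp
        rw [Finset.sum_congr rfl this, Finset.sum_ite_eq F k
          (fun k' => (starRingEnd ℂ) (c k) * c k'), if_pos hk, mul_comm,
          Complex.mul_conj, Complex.normSq_eq_norm_sq]
      exact Finset.sum_congr rfl hin
    have hreal : ∫ x, ‖P x‖ ^ 2 ∂(μT d) = ∑ k ∈ F, ‖c k‖ ^ 2 := by
      have h1 : ∀ x : Td d, ((‖P x‖ ^ 2 : ℝ) : ℂ) = P x * (starRingEnd ℂ) (P x) := by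
        intro x
        rw [Complex.mul_conj, Complex.normSq_eq_norm_sq]
      have h4 : ∀ x : Td d, ‖P x‖ ^ 2 = Complex.reCLM (P x * (starRingEnd ℂ) (P x)) := by
        intro x
        rw [show Complex.reCLM (P x * (starRingEnd ℂ) (P x)) =
          (P x * (starRingEnd ℂ) (P x)).re from rfl, ← h1, Complex.ofReal_re]
      simp_rw [h4]
      rw [ContinuousLinearMap.integral_comp_comm Complex.reCLM
        (cont_integrable (show Continuous fun x : Td d => P x * (starRingEnd ℂ) (P x) from
          hPcont.mul (Complex.continuous_conj.comp hPcont))), hPP]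
      rw [show (Complex.reCLM (∑ k ∈ F, ((‖c k‖ ^ 2 : ℝ) : ℂ))) =
        (∑ k ∈ F, ((‖c k‖ ^ 2 : ℝ) : ℂ)).re from rfl]
      rw [Complex.re_sum]
      exact Finset.sum_congr rfl fun k _ => Complex.ofReal_re _
    have hcv : ∀ x : Td d, (‖P x‖₊ : ℝ≥0∞) ^ (2 : ℝ) = ENNReal.ofReal (‖P x‖ ^ 2) := by
      intro x
      rw [← enorm_eq_nnnorm, ← ofReal_norm, ENNReal.ofReal_rpow_of_nonneg (norm_nonneg _)
        (by norm_num : (0:ℝ) ≤ 2)]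
      congr 1
      rw [← Real.rpow_natCast ‖P x‖ 2]
      norm_num
    calc ∫⁻ x, (‖P x‖₊ : ℝ≥0∞) ^ (2 : ℝ) ∂(μT d)
        = ∫⁻ x, ENNReal.ofReal (‖P x‖ ^ 2) ∂(μT d) := lintegral_congr hcv
      _ = ENNReal.ofReal (∫ x, ‖P x‖ ^ 2 ∂(μT d)) :=
          (ofReal_integral_eq_lintegral_ofReal
            (cont_integrable (hPcont.norm.pow 2))
            (Filter.Eventually.of_forall fun x => sq_nonneg _)).symm
      _ = ENNReal.ofReal (∑ k ∈ F, ‖c k‖ ^ 2) := by rw [hreal]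
      _ ≤ ENNReal.ofReal (F.card : ℝ) := by
          refine ENNReal.ofReal_le_ofReal ?_
          calc ∑ k ∈ F, ‖c k‖ ^ 2 ≤ ∑ _k ∈ F, (1 : ℝ) :=
                Finset.sum_le_sum fun k _ => pow_le_one₀ (norm_nonneg _) (hc_abs k)
            _ = (F.card : ℝ) := by simp
      _ = (F.card : ℝ≥0∞) := ENNReal.ofReal_natCast _
  -- now split on q = 1 or q > 1
  rcases eq_or_lt_of_le hq1 with hq | hq
  · -- q = 1
    subst hq
    rw [ENNReal.ofReal_one]
    calc ENNReal.ofReal (∑ k ∈ F, ‖fCoeff g k‖)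
        ≤ ∫⁻ x, (‖g x‖₊ : ℝ≥0∞) * (‖P x‖₊ : ℝ≥0∞) ∂(μT d) := step2
      _ ≤ ∫⁻ x, (‖g x‖₊ : ℝ≥0∞) * (F.card : ℝ≥0∞) ∂(μT d) :=
          lintegral_mono fun x => mul_le_mul_right (hPsup x) _
      _ = (∫⁻ x, (‖g x‖₊ : ℝ≥0∞) ∂(μT d)) * (F.card : ℝ≥0∞) :=
          lintegral_mul_const' _ _ (ENNReal.natCast_ne_top _)
      _ = eLpNorm g 1 (μT d) * (F.card : ℝ≥0∞) ^ (1 / (1:ℝ)) := by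
          rw [eLpNorm_one_eq_lintegral_enorm]
          norm_num
          rfl
  · -- 1 < q
    set q' := Real.conjExponent q with hq'def
    have hpq : Real.HolderConjugate q q' := Real.HolderConjugate.conjExponent hq
    have hq'2 : 2 ≤ q' := by
      rw [hq'def, Real.conjExponent, le_div_iff₀ (by linarith)]
      linarith
    have hq'pos : 0 < q' := hpq.symm.pos
    have hcard0 : (F.card : ℝ≥0∞) ≠ 0 := by
      simp [Finset.card_eq_zero, hFne.ne_empty]
    have hgm : AEMeasurable (fun x => (‖g x‖₊ : ℝ≥0∞)) (μT d) :=
      (hg.measurable.nnnorm.coe_nnreal_ennreal).aemeasurable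
    have hPm : AEMeasurable (fun x => (‖P x‖₊ : ℝ≥0∞)) (μT d) :=
      (hPcont.measurable.nnnorm.coe_nnreal_ennreal).aemeasurable
    have hH := ENNReal.lintegral_mul_le_Lp_mul_Lq (μT d) hpq hgm hPm
    have hfst : (∫⁻ x, (‖g x‖₊ : ℝ≥0∞) ^ q ∂(μT d)) ^ (1 / q) =
        eLpNorm g (ENNReal.ofReal q) (μT d) := by
      rw [eLpNorm_eq_lintegral_rpow_enorm_toReal
        (by rw [Ne, ENNReal.ofReal_eq_zero]; linarith : ENNReal.ofReal q ≠ 0)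
        ENNReal.ofReal_ne_top, ENNReal.toReal_ofReal (by linarith)]
      rfl
    have hsnd : (∫⁻ x, (‖P x‖₊ : ℝ≥0∞) ^ q' ∂(μT d)) ^ (1 / q') ≤
        (F.card : ℝ≥0∞) ^ (1 / q) := by
      have hptw : ∀ x, (‖P x‖₊ : ℝ≥0∞) ^ q' ≤
          (F.card : ℝ≥0∞) ^ (q' - 2) * (‖P x‖₊ : ℝ≥0∞) ^ (2 : ℝ) := by
        intro x
        by_cases hz : (‖P x‖₊ : ℝ≥0∞) = 0
        · rw [hz, ENNReal.zero_rpow_of_pos hq'pos, ENNReal.zero_rpow_of_pos (by norm_num)]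
          simp
        · have hsplit : (‖P x‖₊ : ℝ≥0∞) ^ q' =
              (‖P x‖₊ : ℝ≥0∞) ^ (q' - 2) * (‖P x‖₊ : ℝ≥0∞) ^ (2 : ℝ) := by
            rw [← ENNReal.rpow_add _ _ hz ENNReal.coe_ne_top]
            norm_num
          rw [hsplit]
          exact mul_le_mul_left (ENNReal.rpow_le_rpow (hPsup x) (by linarith)) _
      have hint : ∫⁻ x, (‖P x‖₊ : ℝ≥0∞) ^ q' ∂(μT d) ≤ (F.card : ℝ≥0∞) ^ (q' - 1) := by
        calc ∫⁻ x, (‖P x‖₊ : ℝ≥0∞) ^ q' ∂(μT d)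
            ≤ ∫⁻ x, (F.card : ℝ≥0∞) ^ (q' - 2) * (‖P x‖₊ : ℝ≥0∞) ^ (2 : ℝ) ∂(μT d) :=
              lintegral_mono hptw
          _ = (F.card : ℝ≥0∞) ^ (q' - 2) * ∫⁻ x, (‖P x‖₊ : ℝ≥0∞) ^ (2 : ℝ) ∂(μT d) :=
              lintegral_const_mul' _ _
                (ENNReal.rpow_ne_top_of_nonneg (by linarith) (ENNReal.natCast_ne_top _))
          _ ≤ (F.card : ℝ≥0∞) ^ (q' - 2) * (F.card : ℝ≥0∞) := mul_le_mul_right hP2 _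
          _ = (F.card : ℝ≥0∞) ^ (q' - 1) := by
              rw [show q' - 1 = (q' - 2) + 1 by ring,
                ENNReal.rpow_add _ _ hcard0 (ENNReal.natCast_ne_top _), ENNReal.rpow_one]
      have hexp : (q' - 1) * (1 / q') = 1 / q := by
        have h1 : q' * (1 / q') = 1 := mul_one_div_cancel hq'pos.ne'
        have h2 := hpq.inv_add_inv_eq_one
        calc (q' - 1) * (1 / q') = q' * (1 / q') - 1 / q' := by ring
          _ = 1 - 1 / q' := by rw [h1]
          _ = 1 / q := by rw [one_div, one_div]; linarith
      calc (∫⁻ x, (‖P x‖₊ : ℝ≥0∞) ^ q' ∂(μT d)) ^ (1 / q')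
          ≤ ((F.card : ℝ≥0∞) ^ (q' - 1)) ^ (1 / q') :=
            ENNReal.rpow_le_rpow hint (by positivity)
        _ = (F.card : ℝ≥0∞) ^ (1 / q) := by
            rw [← ENNReal.rpow_mul, hexp]
    calc ENNReal.ofReal (∑ k ∈ F, ‖fCoeff g k‖)
        ≤ ∫⁻ x, (‖g x‖₊ : ℝ≥0∞) * (‖P x‖₊ : ℝ≥0∞) ∂(μT d) := step2
      _ ≤ (∫⁻ x, (‖g x‖₊ : ℝ≥0∞) ^ q ∂(μT d)) ^ (1 / q) *
            (∫⁻ x, (‖P x‖₊ : ℝ≥0∞) ^ q' ∂(μT d)) ^ (1 / q') := hH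
      _ ≤ eLpNorm g (ENNReal.ofReal q) (μT d) * (F.card : ℝ≥0∞) ^ (1 / q) := by
          rw [← hfst]
          exact mul_le_mul_right hsnd _

end Dual

section Count

theorem card_rho_le {d : ℕ} (s : Fin d → ℕ) : (rhoFinset d s).card ≤ 2 ^ (∑ i, s i) := by
  classical
  set Fi : (j : Fin d) → Finset ℤ := fun j =>
    (Finset.Icc (-(2 ^ s j : ℤ)) (2 ^ s j)).filter
      fun m => ((2 ^ s j : ℤ) / 2) ≤ |m| ∧ |m| < 2 ^ s j with hFi
  have hcomp : ∀ j, (Fi j).card ≤ 2 ^ (s j) := by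
    intro j
    cases hn : s j with
    | zero =>
      have hsub : Fi j ⊆ {0} := by
        intro m hm
        rw [hFi, Finset.mem_filter, hn] at hm
        have h2 : |m| < 1 := by simpa using hm.2.2
        have h0 : m = 0 := by rcases abs_cases m with ⟨he, -⟩ | ⟨he, -⟩ <;> omega
        simp [h0]
      simpa using Finset.card_le_card hsub
    | succ n =>
      have hdiv : ((2 : ℤ) ^ (n + 1)) / 2 = 2 ^ n := by
        rw [pow_succ]
        exact Int.mul_ediv_cancel _ two_ne_zero
      have hsub : Fi j ⊆ Finset.Ioc (-(2 ^ (n + 1) : ℤ)) (-(2 ^ n : ℤ)) ∪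
          Finset.Ico ((2 ^ n : ℤ)) ((2 ^ (n + 1) : ℤ)) := by
        intro m hm
        rw [hFi, Finset.mem_filter, hn, hdiv] at hm
        obtain ⟨-, h1, h2⟩ := hm
        rw [Finset.mem_union, Finset.mem_Ioc, Finset.mem_Ico]
        rcases abs_cases m with ⟨he, -⟩ | ⟨he, -⟩ <;> rw [he] at h1 h2 <;> omega
      have hcard : (Finset.Ioc (-(2 ^ (n + 1) : ℤ)) (-(2 ^ n : ℤ))).card +
          (Finset.Ico ((2 ^ n : ℤ)) ((2 ^ (n + 1) : ℤ))).card = 2 ^ (n + 1) := by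
        rw [Int.card_Ioc, Int.card_Ico]
        have e1 : (-(2 ^ n : ℤ)) - (-(2 ^ (n + 1) : ℤ)) = ((2 ^ n : ℕ) : ℤ) := by
          push_cast [pow_succ]; ring
        have e2 : ((2 ^ (n + 1) : ℤ)) - (2 ^ n : ℤ) = ((2 ^ n : ℕ) : ℤ) := by
          push_cast [pow_succ]; ring
        rw [e1, e2, Int.toNat_natCast, pow_succ]
        ring
      calc (Fi j).card ≤ _ := Finset.card_le_card hsub
        _ ≤ _ := Finset.card_union_le _ _
        _ = 2 ^ (n + 1) := hcard
  calc (rhoFinset d s).card ≤ (Fintype.piFinset Fi).card := by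
        refine Finset.card_le_card fun k hk => ?_
        rw [rhoFinset, Finset.mem_filter, Fintype.mem_piFinset] at hk
        rw [Fintype.mem_piFinset]
        intro j
        rw [hFi, Finset.mem_filter]
        exact ⟨hk.1 j, hk.2 j⟩
    _ = ∏ j, (Fi j).card := Fintype.card_piFinset Fi
    _ ≤ ∏ j, 2 ^ (s j) := Finset.prod_le_prod (fun _ _ => Nat.zero_le _)
        (fun j _ => hcomp j)
    _ = 2 ^ (∑ i, s i) := Finset.prod_pow_eq_pow_sum _ _ _

theorem card_sLevel_le {d : ℕ} (hd : 1 ≤ d) (j : ℕ) :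
    (sLevel d j).card ≤ (j + 1) ^ (d - 1) := by
  classical
  have hdle : d - 1 ≤ d := Nat.sub_le d 1
  set φ : (Fin d → ℕ) → (Fin (d - 1) → ℕ) :=
    fun a i => a (Fin.castLE hdle i) with hφ
  have hmap : ∀ s ∈ sLevel d j,
      φ s ∈ Fintype.piFinset (fun _ : Fin (d - 1) => Finset.range (j + 1)) := by
    intro s hs
    rw [Fintype.mem_piFinset]
    intro i
    rw [sLevel, Finset.mem_filter] at hs
    have h1 : s (Fin.castLE hdle i) ≤ ∑ i', s i' :=
      Finset.single_le_sum (fun _ _ => Nat.zero_le _) (Finset.mem_univ _)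
    have h2 : φ s i = s (Fin.castLE hdle i) := rfl
    rw [Finset.mem_range, h2]
    omega
  have hinj : Set.InjOn φ ↑(sLevel d j) := by
    intro a ha b hb hab
    simp only [Finset.mem_coe, sLevel, Finset.mem_filter] at ha hb
    set last : Fin d := ⟨d - 1, by omega⟩ with hlast
    have hoth : ∀ i : Fin d, i ≠ last → a i = b i := by
      intro i hi
      have hiv : (i : ℕ) < d - 1 := by
        have h2 := i.isLt
        have h3 : (i : ℕ) ≠ d - 1 := fun hc => hi (Fin.ext hc)
        omega
      have := congrFun hab ⟨(i : ℕ), hiv⟩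
      simpa [hφ] using this
    funext i
    by_cases hi : i = last
    · subst hi
      have hsa := ha.2
      have hsb := hb.2
      rw [← Finset.sum_erase_add Finset.univ a (Finset.mem_univ last)] at hsa
      rw [← Finset.sum_erase_add Finset.univ b (Finset.mem_univ last)] at hsb
      have heq : ∑ i ∈ Finset.univ.erase last, a i = ∑ i ∈ Finset.univ.erase last, b i :=
        Finset.sum_congr rfl fun i hi => hoth i (Finset.ne_of_mem_erase hi)
      omega
    · exact hoth i hi
  calc (sLevel d j).card ≤
      (Fintype.piFinset (fun _ : Fin (d - 1) => Finset.range (j + 1))).card :=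
        Finset.card_le_card_of_injOn φ hmap hinj
    _ = (j + 1) ^ (d - 1) := by
        rw [Fintype.card_piFinset]
        simp

end Count

section Factor

theorem two_rpow_sum {ι : Type*} (s : Finset ι) (f : ι → ℝ) :
    (2 : ℝ) ^ (∑ i ∈ s, f i) = ∏ i ∈ s, (2 : ℝ) ^ f i := by
  classical
  induction s using Finset.cons_induction with
  | empty => simp
  | cons a s ha ih =>
    rw [Finset.sum_cons, Finset.prod_cons, Real.rpow_add (by norm_num), ih]

theorem fourier_real_eq {n : ℤ} {x : ℝ} :
    (fourier n ((x : ℝ) : 𝕋) : ℂ) = Complex.exp ((((n : ℝ) * x : ℝ) : ℂ) * Complex.I) := by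
  rw [fourier_coe_apply]
  congr 1
  have hpi : ((Real.pi : ℂ)) ≠ 0 := Complex.ofReal_ne_zero.mpr Real.pi_ne_zero
  push_cast
  field_simp

theorem abs_factor_ge {n : ℤ} {m : ℕ} (hm : 1 ≤ m) (h1 : ((2 : ℤ) ^ m) / 2 ≤ |n|)
    (h2 : |n| < 2 ^ m) :
    1 ≤ ‖fourier n (((Real.pi / 2 ^ m : ℝ)) : 𝕋) - 1‖ := by
  obtain ⟨m', rfl⟩ : ∃ m', m = m' + 1 := ⟨m - 1, by omega⟩
  have hdiv : ((2 : ℤ) ^ (m' + 1)) / 2 = 2 ^ m' := by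
    rw [pow_succ]; exact Int.mul_ediv_cancel _ two_ne_zero
  rw [hdiv] at h1
  set x : ℝ := Real.pi / 2 ^ (m' + 1) with hx
  set θ : ℝ := (n : ℝ) * x with hθ
  have hfour := fourier_real_eq (n := n) (x := x)
  have hre : (fourier n ((x : ℝ) : 𝕋) - 1).re = Real.cos θ - 1 := by
    rw [hfour, Complex.sub_re, Complex.one_re, Complex.exp_ofReal_mul_I_re]
  have hcos : Real.cos θ ≤ 0 := by
    rw [← Real.cos_abs]
    have habs : |θ| = |(n : ℝ)| * x := by
      rw [hθ, abs_mul, abs_of_pos (show (0 : ℝ) < x from by rw [hx]; positivity)]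
    have hn1 : (2 : ℝ) ^ m' ≤ |(n : ℝ)| := by
      rw [← Int.cast_abs]
      exact_mod_cast (by exact_mod_cast h1 : ((2 : ℤ) ^ m' : ℤ) ≤ |n|)
    have hn2 : |(n : ℝ)| ≤ (2 : ℝ) ^ (m' + 1) := by
      rw [← Int.cast_abs]
      exact_mod_cast le_of_lt h2
    refine Real.cos_nonpos_of_pi_div_two_le_of_le ?_ ?_
    · rw [habs, hx]
      have hkey : (2 : ℝ) ^ m' * (Real.pi / 2 ^ (m' + 1)) = Real.pi / 2 := by
        rw [pow_succ]
        field_simp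
      calc Real.pi / 2 = (2 : ℝ) ^ m' * (Real.pi / 2 ^ (m' + 1)) := hkey.symm
        _ ≤ |(n : ℝ)| * (Real.pi / 2 ^ (m' + 1)) :=
            mul_le_mul_of_nonneg_right hn1 (by positivity)
    · rw [habs, hx]
      have hkey : (2 : ℝ) ^ (m' + 1) * (Real.pi / 2 ^ (m' + 1)) = Real.pi := by
        field_simp
      calc |(n : ℝ)| * (Real.pi / 2 ^ (m' + 1)) ≤
            (2 : ℝ) ^ (m' + 1) * (Real.pi / 2 ^ (m' + 1)) :=
              mul_le_mul_of_nonneg_right hn2 (by positivity)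
        _ = Real.pi := hkey
        _ ≤ Real.pi + Real.pi / 2 := by linarith [Real.pi_pos]
  calc (1 : ℝ) ≤ 1 - Real.cos θ := by linarith
    _ = |(fourier n ((x : ℝ) : 𝕋) - 1).re| := by
        rw [hre, abs_of_nonpos (by linarith [Real.cos_le_one θ])]
        ring
    _ ≤ ‖fourier n ((x : ℝ) : 𝕋) - 1‖ := Complex.abs_re_le_norm _

end Factor

section PerS

open scoped ENNReal

theorem per_s_bound {d : ℕ} {q r : ℝ} (hq1 : 1 ≤ q) (hq2 : q ≤ 2) (hr0 : 0 < r)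
    {f : Td d → ℂ} (hf : f ∈ HClass d r (ENNReal.ofReal q)) (j : ℕ) (s : Fin d → ℕ)
    (hs : ∑ i, s i = j) :
    ∑ k ∈ rhoFinset d s, ‖fCoeff f k‖ ≤
      (Real.pi ^ r) ^ d * (2 : ℝ) ^ (-(r - 1 / q) * (j : ℝ)) := by
  classical
  obtain ⟨hfc, hfb⟩ := hf
  set l := ⌊r⌋₊ + 1 with hl
  set e := Finset.univ.filter (fun i : Fin d => s i ≠ 0) with he
  set t : Fin d → ℝ := fun i => Real.pi / 2 ^ (s i) with ht
  set g := mixedDiff l t e f with hg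
  have hgc : Continuous g := mixedDiff_continuous l t e hfc
  have hq0 : 0 < q := lt_of_lt_of_le one_pos hq1
  -- domination of coefficients
  have hdom : ∀ k ∈ rhoFinset d s,
      ‖fCoeff f k‖ ≤ ‖fCoeff g k‖ := by
    intro k hk
    rw [hg, fCoeff_mixedDiff l t e hfc k, norm_mul]
    refine le_mul_of_one_le_left (norm_nonneg _) ?_
    rw [norm_prod]
    have hone : ∀ i ∈ e, (1 : ℝ) ≤ ‖(fourier (k i) ((t i : ℝ) : 𝕋) - 1) ^ l‖ := by
      intro i hi
      rw [norm_pow]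
      refine one_le_pow₀ ?_
      have hsi : 1 ≤ s i := by
        rw [he, Finset.mem_filter] at hi
        omega
      have hk' : ((2 : ℤ) ^ (s i)) / 2 ≤ |k i| ∧ |k i| < 2 ^ (s i) := by
        rw [rhoFinset, Finset.mem_filter] at hk
        exact hk.2 i
      exact abs_factor_ge hsi hk'.1 hk'.2
    calc (1 : ℝ) = ∏ _i ∈ e, (1 : ℝ) := by simp
      _ ≤ ∏ i ∈ e, ‖(fourier (k i) ((t i : ℝ) : 𝕋) - 1) ^ l‖ :=
        Finset.prod_le_prod (fun _ _ => zero_le_one) hone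
  -- key dual estimate
  have hkey := sum_abs_fCoeff_le (rhoFinset d s) hgc hq1 hq2
  have hcls : eLpNorm g (ENNReal.ofReal q) (μT d) ≤
      ENNReal.ofReal (∏ i ∈ e, |t i| ^ r) := hfb e t
  have hchain : ENNReal.ofReal (∑ k ∈ rhoFinset d s, ‖fCoeff g k‖) ≤
      ENNReal.ofReal (∏ i ∈ e, |t i| ^ r) * ((rhoFinset d s).card : ℝ≥0∞) ^ (1 / q) :=
    le_trans hkey (mul_le_mul_left hcls _)
  have hfin : ENNReal.ofReal (∏ i ∈ e, |t i| ^ r) *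
      ((rhoFinset d s).card : ℝ≥0∞) ^ (1 / q) ≠ ⊤ :=
    ENNReal.mul_ne_top ENNReal.ofReal_ne_top
      (ENNReal.rpow_ne_top_of_nonneg (by positivity) (ENNReal.natCast_ne_top _))
  have hreal : ∑ k ∈ rhoFinset d s, ‖fCoeff g k‖ ≤
      (∏ i ∈ e, |t i| ^ r) * ((rhoFinset d s).card : ℝ) ^ (1 / q) := by
    have h1 := (ENNReal.ofReal_le_iff_le_toReal hfin).mp hchain
    rwa [ENNReal.toReal_mul, ENNReal.toReal_ofReal
      (Finset.prod_nonneg fun i _ => Real.rpow_nonneg (abs_nonneg _) r),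
      ← ENNReal.toReal_rpow, ENNReal.toReal_natCast] at h1
  -- numeric bound on the product of steps
  have hA : (∏ i ∈ e, |t i| ^ r) ≤
      (Real.pi ^ r) ^ d * (2 : ℝ) ^ (-((j : ℝ) * r)) := by
    have h1 : ∀ i ∈ e, |t i| ^ r =
        Real.pi ^ r * (2 : ℝ) ^ (-((s i : ℝ) * r)) := by
      intro i _
      have ht' : |t i| = Real.pi / 2 ^ (s i) :=
        abs_of_pos (show (0 : ℝ) < t i from by rw [ht]; positivity)
      rw [ht', Real.div_rpow Real.pi_pos.le (by positivity),
        ← Real.rpow_natCast 2 (s i), ← Real.rpow_mul (by norm_num),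
        Real.rpow_neg (by norm_num), div_eq_mul_inv]
    rw [Finset.prod_congr rfl h1, Finset.prod_mul_distrib, Finset.prod_const]
    have h2 : ∏ i ∈ e, (2 : ℝ) ^ (-((s i : ℝ) * r)) =
        (2 : ℝ) ^ (-((j : ℝ) * r)) := by
      rw [← two_rpow_sum]
      congr 1
      rw [Finset.sum_neg_distrib, ← Finset.sum_mul]
      congr 2
      have h3 : ∑ i ∈ e, (s i : ℝ) = ∑ i, (s i : ℝ) := by
        rw [he]
        exact Finset.sum_filter_of_ne fun i _ hne => by
          exact_mod_cast fun h0 => hne (by rw [h0]; norm_num)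
      rw [h3, ← Nat.cast_sum, hs]
    rw [h2]
    refine mul_le_mul_of_nonneg_right ?_ (Real.rpow_nonneg (by norm_num) _)
    refine pow_le_pow_right₀ ?_ (le_trans (Finset.card_filter_le _ _) (by simp))
    exact Real.one_le_rpow (by linarith [Real.pi_gt_three]) hr0.le
  -- numeric bound on the cardinality factor
  have hB : ((rhoFinset d s).card : ℝ) ^ (1 / q) ≤ (2 : ℝ) ^ ((j : ℝ) * (1 / q)) := by
    have hcard : ((rhoFinset d s).card : ℝ) ≤ (2 : ℝ) ^ (j : ℕ) := by
      exact_mod_cast (hs ▸ card_rho_le s)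
    calc ((rhoFinset d s).card : ℝ) ^ (1 / q) ≤ ((2 : ℝ) ^ (j : ℕ)) ^ (1 / q) :=
        Real.rpow_le_rpow (Nat.cast_nonneg _) hcard (by positivity)
      _ = (2 : ℝ) ^ ((j : ℝ) * (1 / q)) := by
        rw [← Real.rpow_natCast 2 j, ← Real.rpow_mul (by norm_num)]
  calc ∑ k ∈ rhoFinset d s, ‖fCoeff f k‖
      ≤ ∑ k ∈ rhoFinset d s, ‖fCoeff g k‖ := Finset.sum_le_sum hdom
    _ ≤ (∏ i ∈ e, |t i| ^ r) * ((rhoFinset d s).card : ℝ) ^ (1 / q) := hreal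
    _ ≤ ((Real.pi ^ r) ^ d * (2 : ℝ) ^ (-((j : ℝ) * r))) * (2 : ℝ) ^ ((j : ℝ) * (1 / q)) := by
        refine mul_le_mul hA hB (Real.rpow_nonneg (Nat.cast_nonneg _) _) (by positivity)
    _ = (Real.pi ^ r) ^ d * (2 : ℝ) ^ (-(r - 1 / q) * (j : ℝ)) := by
        rw [mul_assoc, ← Real.rpow_add (by norm_num)]
        congr 2
        ring

end PerS

/-- Embedding `𝐇^r_q ↪ 𝐖^{a,b}_A` with `a = r - 1/q`, `b = 1`. -/
theorem statement3 (d : ℕ) (hd : 1 ≤ d) (q r : ℝ) (hq1 : 1 ≤ q) (hq2 : q ≤ 2)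
    (hr : 1 / q < r) :
    ∃ C : ℝ, 0 < C ∧ ∀ f ∈ HClass d r (ENNReal.ofReal q), ∀ j : ℕ,
      ANormPiece f j ≤
        C * (2 : ℝ) ^ (-(r - 1 / q) * (j : ℝ)) * ((max j 1 : ℕ) : ℝ) ^ ((d : ℝ) - 1) := by
  have hq0 : 0 < q := lt_of_lt_of_le one_pos hq1
  have hr0 : 0 < r := lt_trans (by positivity) hr
  refine ⟨(Real.pi ^ r) ^ d * 2 ^ (d - 1), by positivity, ?_⟩
  intro f hf j
  set B : ℝ := (Real.pi ^ r) ^ d * (2 : ℝ) ^ (-(r - 1 / q) * (j : ℝ)) with hB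
  have hBpos : 0 ≤ B := by rw [hB]; positivity
  have h1 : ANormPiece f j ≤ ((sLevel d j).card : ℝ) * B := by
    rw [ANormPiece]
    calc ∑ s ∈ sLevel d j, ∑ k ∈ rhoFinset d s, ‖fCoeff f k‖
        ≤ ∑ _s ∈ sLevel d j, B := by
          refine Finset.sum_le_sum fun s hs => ?_
          rw [sLevel, Finset.mem_filter] at hs
          exact per_s_bound hq1 hq2 hr0 hf j s hs.2
      _ = ((sLevel d j).card : ℝ) * B := by
          rw [Finset.sum_const, nsmul_eq_mul]
  have hmax : j + 1 ≤ 2 * max j 1 := by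
    rcases Nat.le_total j 1 with h | h
    · rw [Nat.max_eq_right h]; omega
    · rw [Nat.max_eq_left h]; omega
  have h2 : ((sLevel d j).card : ℝ) ≤ 2 ^ (d - 1) * ((max j 1 : ℕ) : ℝ) ^ (d - 1) := by
    calc ((sLevel d j).card : ℝ) ≤ (((j + 1) ^ (d - 1) : ℕ) : ℝ) := by
          exact_mod_cast card_sLevel_le hd j
      _ = ((j : ℝ) + 1) ^ (d - 1) := by push_cast; ring
      _ ≤ (2 * ((max j 1 : ℕ) : ℝ)) ^ (d - 1) := by
          refine pow_le_pow_left₀ (by positivity) ?_ _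
          exact_mod_cast hmax
      _ = 2 ^ (d - 1) * ((max j 1 : ℕ) : ℝ) ^ (d - 1) := mul_pow _ _ _
  have h3 : ((max j 1 : ℕ) : ℝ) ^ ((d : ℝ) - 1) = ((max j 1 : ℕ) : ℝ) ^ (d - 1 : ℕ) := by
    rw [← Real.rpow_natCast ((max j 1 : ℕ) : ℝ) (d - 1)]
    congr 1
    rw [Nat.cast_sub hd, Nat.cast_one]
  rw [h3]
  calc ANormPiece f j ≤ ((sLevel d j).card : ℝ) * B := h1
    _ ≤ (2 ^ (d - 1) * ((max j 1 : ℕ) : ℝ) ^ (d - 1)) * B :=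
        mul_le_mul_of_nonneg_right h2 hBpos
    _ = (Real.pi ^ r) ^ d * 2 ^ (d - 1) * (2 : ℝ) ^ (-(r - 1 / q) * (j : ℝ)) *
        ((max j 1 : ℕ) : ℝ) ^ (d - 1 : ℕ) := by
        rw [hB]; ring
end

section
/- Let Ω be a compact subset of ℝ^d with a probability measure μ, and let {ψ_k}_{k∈ℤ^d} be an orthonormal system in L_2(Ω, μ) with ‖ψ_k‖_∞ ≤ B for all k. Let N = (N_1,…,N_d) ∈ ℕ_0^d and θ(N) := ∏_{j=1}^d (2N_j + 1). Then for every q ∈ [1,2], every β ∈ (0,1], and every f = Σ_{k∈Π(N,d)} c_k ψ_k one has (Σ_{k∈Π(N,d)} |c_k|^β)^{1/β} ≤ B^{2/q−1} θ(N)^{1/β − 1 + 1/q} ‖f‖_{L_q(Ω,μ)}. -/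
open MeasureTheory Real Complex
open scoped BigOperators

private lemma integral_ofRealC {α : Type*} [MeasurableSpace α] {μ : Measure α} (g : α → ℝ) :
    ∫ x, ((g x : ℝ) : ℂ) ∂μ = ((∫ x, g x ∂μ : ℝ) : ℂ) := integral_ofReal


/-- Corollary 5.2: `A_β` quasi-norm bound for uniformly bounded orthonormal systems. -/
theorem statement7 (d : ℕ) (Ω : Set (Fin d → ℝ)) (hΩ : IsCompact Ω)
    (μ : Measure Ω) [IsProbabilityMeasure μ]
    (ψ : (Fin d → ℤ) → Ω → ℂ) (B : ℝ)
    (hmeas : ∀ k, AEStronglyMeasurable (ψ k) μ)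
    (hB : ∀ k x, ‖ψ k x‖ ≤ B)
    (horth : ∀ k k' : Fin d → ℤ,
      ∫ x, ψ k x * (starRingEnd ℂ) (ψ k' x) ∂μ = if k = k' then 1 else 0)
    (N : Fin d → ℕ) (q β : ℝ) (hq1 : 1 ≤ q) (hq2 : q ≤ 2) (hβ0 : 0 < β) (hβ1 : β ≤ 1)
    (c : (Fin d → ℤ) → ℂ) (f : Ω → ℂ)
    (hf : ∀ x, f x = ∑ k ∈ PiN d N, c k * ψ k x) :
    (∑ k ∈ PiN d N, ‖c k‖ ^ β) ^ (1 / β) ≤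
      B ^ (2 / q - 1) * ((thetaN d N : ℝ)) ^ (1 / β - 1 + 1 / q) *
        (∫ x, ‖f x‖ ^ q ∂μ) ^ (1 / q) := by
    classical
  have hq0 : (0:ℝ) < q := lt_of_lt_of_le one_pos hq1
  set P : Finset (Fin d → ℤ) := PiN d N with hPdef
  -- cardinality of the box
  have hcardN : (PiN d N).card = thetaN d N := by
    rw [PiN, thetaN, Fintype.card_piFinset]
    exact Finset.prod_congr rfl fun j _ => by rw [Int.card_Icc]; omega
  have hθpos : (0:ℝ) < (thetaN d N : ℝ) := by
    have : 0 < thetaN d N := Finset.prod_pos fun j _ => Nat.succ_pos _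
    exact_mod_cast this
  have hcard : ((P.card : ℕ) : ℝ) = (thetaN d N : ℝ) := by rw [hPdef, hcardN]
  -- nonemptiness and basic bounds on B
  have hne : Nonempty Ω := by
    by_contra h
    rw [not_nonempty_iff] at h
    have h1 : (μ Set.univ) = 1 := measure_univ
    rw [Set.univ_eq_empty_iff.mpr h, measure_empty] at h1
    exact zero_ne_one h1
  have hB0 : 0 ≤ B := le_trans (norm_nonneg _) (hB 0 (Classical.arbitrary Ω))
  have hboundC : ∀ (g : Ω → ℂ) (C : ℝ), AEStronglyMeasurable g μ →
      (∀ x, ‖g x‖ ≤ C) → Integrable g μ := fun g C hg hC =>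
    ⟨hg, HasFiniteIntegral.of_bounded (C := C)
      (Filter.Eventually.of_forall fun x => by simpa using hC x)⟩
  have hboundR : ∀ (g : Ω → ℝ) (C : ℝ), AEStronglyMeasurable g μ →
      (∀ x, |g x| ≤ C) → Integrable g μ := fun g C hg hC =>
    ⟨hg, HasFiniteIntegral.of_bounded (C := C)
      (Filter.Eventually.of_forall fun x => by simpa using hC x)⟩
  have hconj : ∀ k, AEStronglyMeasurable (fun x => (starRingEnd ℂ) (ψ k x)) μ := by
    intro k
    exact Complex.continuous_conj.comp_aestronglyMeasurable (hmeas k)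
  have hpsi_int : ∀ k k', Integrable (fun x => ψ k x * (starRingEnd ℂ) (ψ k' x)) μ := by
    intro k k'
    refine hboundC _ (B * B) ((hmeas k).mul (hconj k')) fun x => ?_
    rw [norm_mul]
    simp only [Complex.norm_conj]
    exact mul_le_mul (hB k x) (hB k' x) (norm_nonneg _) hB0
  have hB1 : 1 ≤ B := by
    have h0 := horth 0 0
    rw [if_pos rfl] at h0
    have h2 : ((∫ x, ‖ψ 0 x‖ ^ 2 ∂μ : ℝ) : ℂ) = 1 := by
      rw [← h0, show (fun x => ψ 0 x * (starRingEnd ℂ) (ψ 0 x))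
            = fun x => ((‖ψ 0 x‖ ^ 2 : ℝ) : ℂ) from
          funext fun x => by rw [Complex.mul_conj, Complex.sq_norm], integral_ofRealC]
    have h3 : ∫ x, ‖ψ 0 x‖ ^ 2 ∂μ = 1 := by exact_mod_cast h2
    have hsq_int : Integrable (fun x => ‖ψ 0 x‖ ^ 2) μ := by
      have hsq : (fun x : Ω => ‖ψ 0 x‖ ^ 2)
          = fun x => ‖ψ 0 x‖ * ‖ψ 0 x‖ := by
        funext x; ring
      rw [hsq]
      refine hboundR _ (B * B) ((hmeas 0).norm.mul (hmeas 0).norm) fun x => ?_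
      rw [_root_.abs_of_nonneg (mul_nonneg (norm_nonneg _) (norm_nonneg _))]
      exact mul_le_mul (hB 0 x) (hB 0 x) (norm_nonneg _) hB0
    have h4 : ∫ x, ‖ψ 0 x‖ ^ 2 ∂μ ≤ ∫ _x, B ^ 2 ∂μ :=
      integral_mono hsq_int (integrable_const _)
        fun x => pow_le_pow_left₀ (norm_nonneg _) (hB 0 x) 2
    rw [h3, integral_const] at h4
    simp only [measure_univ, probReal_univ, ENNReal.toReal_one, one_smul, smul_eq_mul, one_mul] at h4
    nlinarith
  -- the key L2 identity
  set S2 : ℝ := ∑ k ∈ P, ‖c k‖ ^ 2 with hS2def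
  have hS2nn : 0 ≤ S2 := Finset.sum_nonneg fun k _ => sq_nonneg _
  have key : ∫ x, ‖f x‖ ^ 2 ∂μ = S2 := by
    have hterm : ∀ k k', Integrable
        (fun x => (c k * (starRingEnd ℂ) (c k')) * (ψ k x * (starRingEnd ℂ) (ψ k' x))) μ :=
      fun k k' => (hpsi_int k k').const_mul _
    have hexp : (fun x => f x * (starRingEnd ℂ) (f x)) = fun x => ∑ k ∈ P, ∑ k' ∈ P,
        (c k * (starRingEnd ℂ) (c k')) * (ψ k x * (starRingEnd ℂ) (ψ k' x)) := by
      funext x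
      rw [hf x, map_sum, Finset.sum_mul_sum]
      exact Finset.sum_congr rfl fun k _ => Finset.sum_congr rfl fun k' _ => by
        simp only [map_mul]; ring
    have hcint : ((∫ x, ‖f x‖ ^ 2 ∂μ : ℝ) : ℂ)
        = ∫ x, f x * (starRingEnd ℂ) (f x) ∂μ := by
      rw [show (fun x => f x * (starRingEnd ℂ) (f x))
            = fun x => ((‖f x‖ ^ 2 : ℝ) : ℂ) from
          funext fun x => by rw [Complex.mul_conj, Complex.sq_norm], integral_ofRealC]
    have hsum : ∫ x, f x * (starRingEnd ℂ) (f x) ∂μ = ((S2 : ℝ) : ℂ) := by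
      calc ∫ x, f x * (starRingEnd ℂ) (f x) ∂μ
          = ∫ x, ∑ k ∈ P, ∑ k' ∈ P,
              (c k * (starRingEnd ℂ) (c k')) * (ψ k x * (starRingEnd ℂ) (ψ k' x)) ∂μ := by
            rw [hexp]
        _ = ∑ k ∈ P, ∑ k' ∈ P, (c k * (starRingEnd ℂ) (c k')) *
              ∫ x, ψ k x * (starRingEnd ℂ) (ψ k' x) ∂μ := by
            rw [integral_finset_sum _ fun k _ => integrable_finset_sum _ fun k' _ => hterm k k']
            exact Finset.sum_congr rfl fun k _ => by
              rw [integral_finset_sum _ fun k' _ => hterm k k']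
              exact Finset.sum_congr rfl fun k' _ => integral_const_mul _ _
        _ = ∑ k ∈ P, c k * (starRingEnd ℂ) (c k) := by
            refine Finset.sum_congr rfl fun k hk => ?_
            rw [Finset.sum_congr rfl fun k' (_ : k' ∈ P) => by rw [horth k k']]
            simp [Finset.sum_ite_eq, hk]
        _ = ((S2 : ℝ) : ℂ) := by
            rw [hS2def, Complex.ofReal_sum]
            exact Finset.sum_congr rfl fun k _ => by rw [Complex.mul_conj, Complex.sq_norm]
    rw [hsum] at hcint
    exact_mod_cast hcint
  -- uniform bound on f
  set T : ℝ := ∑ k ∈ P, ‖c k‖ with hTdef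
  have hTnn : 0 ≤ T := Finset.sum_nonneg fun _ _ => norm_nonneg _
  have hM : ∀ x, ‖f x‖ ≤ B * T := by
    intro x
    rw [hf x]
    calc ‖∑ k ∈ P, c k * ψ k x‖ ≤ ∑ k ∈ P, ‖c k * ψ k x‖ :=
          norm_sum_le _ _
      _ ≤ ∑ k ∈ P, ‖c k‖ * B := by
          refine Finset.sum_le_sum fun k _ => ?_
          rw [norm_mul]
          exact mul_le_mul_of_nonneg_left (hB k x) (norm_nonneg _)
      _ = B * T := by rw [← Finset.sum_mul, hTdef]; ring
  have hT2 : T ^ 2 ≤ (thetaN d N : ℝ) * S2 := by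
    calc T ^ 2 ≤ (P.card : ℝ) * ∑ k ∈ P, ‖c k‖ ^ 2 := sq_sum_le_card_mul_sum_sq
      _ = (thetaN d N : ℝ) * S2 := by rw [hcard, hS2def]
  -- integrability facts for f
  have hfm : AEStronglyMeasurable f μ := by
    rw [funext hf]
    exact Finset.aestronglyMeasurable_fun_sum _ fun k _ => (hmeas k).const_mul _
  have habsfm : AEStronglyMeasurable (fun x => ‖f x‖) μ := by
    simpa using hfm.norm
  set Iq : ℝ := ∫ x, ‖f x‖ ^ q ∂μ with hIqdef
  have hfq_int : Integrable (fun x => ‖f x‖ ^ q) μ := by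
    refine hboundR _ ((B * T) ^ q) ((Real.continuous_rpow_const (by linarith)).comp_aestronglyMeasurable habsfm) fun x => ?_
    rw [_root_.abs_of_nonneg (Real.rpow_nonneg (norm_nonneg _) _)]
    exact Real.rpow_le_rpow (norm_nonneg _) (hM x) (by linarith)
  have hIqnn : 0 ≤ Iq :=
    integral_nonneg fun x => Real.rpow_nonneg (norm_nonneg _) _
  have hBTnn : 0 ≤ B * T := mul_nonneg hB0 hTnn
  have hf2_int : Integrable (fun x => ‖f x‖ ^ (2:ℕ)) μ := by
    have hsq : (fun x : Ω => ‖f x‖ ^ (2:ℕ))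
        = fun x => ‖f x‖ * ‖f x‖ := by
      funext x; ring
    rw [hsq]
    refine hboundR _ ((B * T) * (B * T)) (habsfm.mul habsfm) fun x => ?_
    rw [_root_.abs_of_nonneg (mul_nonneg (norm_nonneg _) (norm_nonneg _))]
    exact mul_le_mul (hM x) (hM x) (norm_nonneg _) hBTnn
  -- comparison of L2 and Lq
  have h2q : S2 ≤ (B * T) ^ (2 - q) * Iq := by
    have hpt : ∀ x, ‖f x‖ ^ (2:ℕ) ≤ (B * T) ^ (2 - q) * ‖f x‖ ^ q := by
      intro x
      have ha : (0:ℝ) ≤ ‖f x‖ := norm_nonneg _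
      have h1 : ‖f x‖ ^ (2:ℕ)
          = ‖f x‖ ^ q * ‖f x‖ ^ (2 - q) := by
        rw [← Real.rpow_natCast (‖f x‖) 2,
          show ((2:ℕ):ℝ) = q + (2 - q) by push_cast; ring,
          Real.rpow_add' ha (by norm_num)]
      rw [h1, mul_comm ((B * T) ^ (2 - q))]
      exact mul_le_mul_of_nonneg_left
        (Real.rpow_le_rpow ha (hM x) (by linarith)) (Real.rpow_nonneg ha q)
    calc S2 = ∫ x, ‖f x‖ ^ (2:ℕ) ∂μ := key.symm
      _ ≤ ∫ x, (B * T) ^ (2 - q) * ‖f x‖ ^ q ∂μ :=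
          integral_mono hf2_int (hfq_int.const_mul _) hpt
      _ = (B * T) ^ (2 - q) * Iq := by rw [integral_const_mul, hIqdef]
  rcases eq_or_lt_of_le hS2nn with hS20 | hS2pos
  · -- degenerate case: all coefficients vanish
    have hc0 : ∀ k ∈ P, ‖c k‖ = 0 := by
      intro k hk
      have := (Finset.sum_eq_zero_iff_of_nonneg fun k (_ : k ∈ P) =>
        sq_nonneg (‖c k‖)).mp hS20.symm k hk
      exact pow_eq_zero_iff (two_ne_zero) |>.mp this
    have hz : ∑ k ∈ P, ‖c k‖ ^ β = 0 :=
      Finset.sum_eq_zero fun k hk => by rw [hc0 k hk]; exact Real.zero_rpow (ne_of_gt hβ0)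
    rw [hz, Real.zero_rpow (by positivity)]
    have h1 : (0:ℝ) ≤ B ^ (2 / q - 1) := Real.rpow_nonneg hB0 _
    have h2 : (0:ℝ) ≤ (thetaN d N : ℝ) ^ (1 / β - 1 + 1 / q) := Real.rpow_nonneg hθpos.le _
    have h3 : (0:ℝ) ≤ Iq ^ (1 / q) := Real.rpow_nonneg hIqnn _
    positivity
  · -- main case
    set S : ℝ := S2 ^ ((1:ℝ)/2) with hSdef
    have hSpos : 0 < S := Real.rpow_pos_of_pos hS2pos _
    have hTle : T ≤ (thetaN d N : ℝ) ^ ((1:ℝ)/2) * S := by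
      have h1 : T ^ ((2:ℕ):ℝ) ≤ (thetaN d N : ℝ) * S2 := by
        rw [Real.rpow_natCast]; exact hT2
      calc T = (T ^ ((2:ℕ):ℝ)) ^ ((1:ℝ)/2) := by
            rw [← Real.rpow_mul hTnn]; norm_num
        _ ≤ ((thetaN d N : ℝ) * S2) ^ ((1:ℝ)/2) :=
            Real.rpow_le_rpow (Real.rpow_nonneg hTnn _) h1 (by norm_num)
        _ = (thetaN d N : ℝ) ^ ((1:ℝ)/2) * S := by
            rw [Real.mul_rpow hθpos.le hS2nn, hSdef]
    -- bound S by the Lq norm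
    have hSle : S ≤ B ^ (2/q - 1) * ((thetaN d N : ℝ) ^ ((1:ℝ)/q - 1/2) * Iq ^ ((1:ℝ)/q)) := by
      set C : ℝ := B * (thetaN d N : ℝ) ^ ((1:ℝ)/2) with hCdef
      have hCnn : 0 ≤ C := mul_nonneg hB0 (Real.rpow_nonneg hθpos.le _)
      have hBT : B * T ≤ C * S := by
        rw [hCdef, mul_assoc]
        exact mul_le_mul_of_nonneg_left hTle hB0
      have h3 : S2 ≤ C ^ (2 - q) * S ^ (2 - q) * Iq := by
        calc S2 ≤ (B * T) ^ (2 - q) * Iq := h2q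
          _ ≤ (C * S) ^ (2 - q) * Iq := by
              exact mul_le_mul_of_nonneg_right
                (Real.rpow_le_rpow (mul_nonneg hB0 hTnn) hBT (by linarith)) hIqnn
          _ = C ^ (2 - q) * S ^ (2 - q) * Iq := by rw [Real.mul_rpow hCnn hSpos.le]
      have hs2 : S2 = S ^ q * S ^ (2 - q) := by
        rw [← Real.rpow_add hSpos, show q + (2 - q) = (2:ℝ) by ring, hSdef,
          ← Real.rpow_mul hS2nn, show (1:ℝ)/2 * 2 = 1 by norm_num, Real.rpow_one]
      have h5 : S ^ q ≤ C ^ (2 - q) * Iq := by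
        have h4 : S ^ q * S ^ (2 - q) ≤ (C ^ (2 - q) * Iq) * S ^ (2 - q) := by
          calc S ^ q * S ^ (2 - q) = S2 := hs2.symm
            _ ≤ C ^ (2 - q) * S ^ (2 - q) * Iq := h3
            _ = (C ^ (2 - q) * Iq) * S ^ (2 - q) := by ring
        exact le_of_mul_le_mul_right h4 (Real.rpow_pos_of_pos hSpos _)
      have h6 := Real.rpow_le_rpow (Real.rpow_nonneg hSpos.le _) h5
        (le_of_lt (by positivity : (0:ℝ) < 1/q))
      have hL : (S ^ q) ^ ((1:ℝ)/q) = S := by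
        rw [← Real.rpow_mul hSpos.le, mul_one_div, div_self (ne_of_gt hq0), Real.rpow_one]
      have hR : (C ^ (2 - q) * Iq) ^ ((1:ℝ)/q) = C ^ ((2 - q)/q) * Iq ^ ((1:ℝ)/q) := by
        rw [Real.mul_rpow (Real.rpow_nonneg hCnn _) hIqnn, ← Real.rpow_mul hCnn, mul_one_div]
      have hCsplit : C ^ ((2 - q)/q)
          = B ^ (2/q - 1) * (thetaN d N : ℝ) ^ ((1:ℝ)/q - 1/2) := by
        rw [hCdef, Real.mul_rpow hB0 (Real.rpow_nonneg hθpos.le _), ← Real.rpow_mul hθpos.le,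
          show (2 - q)/q = 2/q - 1 from by rw [sub_div, div_self hq0.ne'],
          show (1:ℝ)/2 * (2/q - 1) = (1:ℝ)/q - 1/2 from by
            rw [mul_sub, mul_one, div_mul_div_comm, one_mul, ← div_div]; norm_num]
      rw [hL, hR, hCsplit, mul_assoc] at h6
      exact h6
    -- Jensen / Hölder step for the β-sum
    set U : ℝ := ∑ k ∈ P, ‖c k‖ ^ β with hUdef
    have hUnn : 0 ≤ U :=
      Finset.sum_nonneg fun k _ => Real.rpow_nonneg (norm_nonneg _) _
    have hncard : (0:ℝ) < (P.card : ℝ) := by rw [hcard]; exact hθpos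
    have hjensen := Real.rpow_arith_mean_le_arith_mean_rpow P
      (fun _ => ((P.card : ℝ))⁻¹) (fun k => ‖c k‖ ^ β)
      (fun _ _ => by positivity)
      (by rw [Finset.sum_const, nsmul_eq_mul, mul_inv_cancel₀ (ne_of_gt hncard)])
      (fun k _ => Real.rpow_nonneg (norm_nonneg _) _)
      (p := 2/β) (by rw [le_div_iff₀ hβ0]; linarith)
    have hz2 : ∀ k, (‖c k‖ ^ β) ^ ((2:ℝ)/β) = ‖c k‖ ^ (2:ℕ) := by
      intro k
      rw [← Real.rpow_natCast (‖c k‖) 2, ← Real.rpow_mul (norm_nonneg _)]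
      congr 1
      push_cast
      field_simp
    have h7 : (((P.card : ℝ))⁻¹ * U) ^ ((2:ℝ)/β) ≤ ((P.card : ℝ))⁻¹ * S2 := by
      calc (((P.card : ℝ))⁻¹ * U) ^ ((2:ℝ)/β)
          = (∑ k ∈ P, ((P.card : ℝ))⁻¹ * ‖c k‖ ^ β) ^ ((2:ℝ)/β) := by
            rw [← Finset.mul_sum, hUdef]
        _ ≤ ∑ k ∈ P, ((P.card : ℝ))⁻¹ * (‖c k‖ ^ β) ^ ((2:ℝ)/β) := hjensen
        _ = ((P.card : ℝ))⁻¹ * S2 := by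
            simp only [hz2]
            rw [← Finset.mul_sum, hS2def]
    have h8 : ((P.card : ℝ))⁻¹ * U ≤ (((P.card : ℝ))⁻¹ * S2) ^ (β/2) := by
      have h0 : 0 ≤ ((P.card : ℝ))⁻¹ * U := by positivity
      calc ((P.card : ℝ))⁻¹ * U
          = ((((P.card : ℝ))⁻¹ * U) ^ ((2:ℝ)/β)) ^ (β/2) := by
            rw [← Real.rpow_mul h0, show (2:ℝ)/β * (β/2) = 1 by field_simp, Real.rpow_one]
        _ ≤ (((P.card : ℝ))⁻¹ * S2) ^ (β/2) :=
            Real.rpow_le_rpow (Real.rpow_nonneg h0 _) h7 (by positivity)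
    have hJ : U ^ ((1:ℝ)/β) ≤ (thetaN d N : ℝ) ^ ((1:ℝ)/β - 1/2) * S := by
      have h9 : U ≤ (thetaN d N : ℝ) * (((thetaN d N : ℝ))⁻¹ * S2) ^ (β/2) := by
        have h10 := mul_le_mul_of_nonneg_left h8 hncard.le
        rw [← mul_assoc, mul_inv_cancel₀ (ne_of_gt hncard), one_mul, hcard] at h10
        exact h10
      have h11 := Real.rpow_le_rpow hUnn h9 (by positivity : (0:ℝ) ≤ 1/β)
      refine le_trans h11 (le_of_eq ?_)
      have hinv : (0:ℝ) ≤ ((thetaN d N : ℝ))⁻¹ * S2 := by positivity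
      calc ((thetaN d N : ℝ) * (((thetaN d N : ℝ))⁻¹ * S2) ^ (β/2)) ^ ((1:ℝ)/β)
          = (thetaN d N : ℝ) ^ ((1:ℝ)/β) *
              ((((thetaN d N : ℝ))⁻¹ * S2) ^ (β/2)) ^ ((1:ℝ)/β) := by
            rw [Real.mul_rpow hθpos.le (Real.rpow_nonneg hinv _)]
        _ = (thetaN d N : ℝ) ^ ((1:ℝ)/β) * (((thetaN d N : ℝ))⁻¹ * S2) ^ ((1:ℝ)/2) := by
            rw [← Real.rpow_mul hinv, show β/2 * ((1:ℝ)/β) = 1/2 by field_simp]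
        _ = (thetaN d N : ℝ) ^ ((1:ℝ)/β) *
              (((thetaN d N : ℝ) ^ ((1:ℝ)/2))⁻¹ * S) := by
            rw [Real.mul_rpow (by positivity) hS2nn, Real.inv_rpow hθpos.le, hSdef]
        _ = (thetaN d N : ℝ) ^ ((1:ℝ)/β - 1/2) * S := by
            rw [Real.rpow_sub hθpos]
            field_simp
    -- combine everything
    have hrpnn : (0:ℝ) ≤ (thetaN d N : ℝ) ^ ((1:ℝ)/β - 1/2) := Real.rpow_nonneg hθpos.le _
    have hcomb : (thetaN d N : ℝ) ^ ((1:ℝ)/β - 1/2) * (thetaN d N : ℝ) ^ ((1:ℝ)/q - 1/2)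
        = (thetaN d N : ℝ) ^ (1/β - 1 + 1/q) := by
      rw [← Real.rpow_add hθpos]
      congr 1
      ring
    calc U ^ ((1:ℝ)/β) ≤ (thetaN d N : ℝ) ^ ((1:ℝ)/β - 1/2) * S := hJ
      _ ≤ (thetaN d N : ℝ) ^ ((1:ℝ)/β - 1/2) *
            (B ^ (2/q - 1) * ((thetaN d N : ℝ) ^ ((1:ℝ)/q - 1/2) * Iq ^ ((1:ℝ)/q))) :=
          mul_le_mul_of_nonneg_left hSle hrpnn
      _ = B ^ (2/q - 1) * (thetaN d N : ℝ) ^ (1/β - 1 + 1/q) * Iq ^ (1/q) := by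
          rw [← hcomb]; ring
end
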